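/- arXiv:2312.07164 — 4 statements merged into one kernel-verified Lean document; each statement's English description precedes it below -/
import Mathlib

section
/- If 0 < s < 1 and s = e^{-2(1+s)/(α+2)} for some α ≥ 2, then s ≤ e^{-2/(α+2)} and s ≥ (α+4)/((α+2)e^{4/(α+2)} + 2). -/
/-!
With `c = 2 / (α + 2)` the equation reads `s = exp (-c (1 + s))`. Since `s > 0`, the exponent is at
most `-c`, which gives the upper bound. For the lower bound, replace `exp` by its tangent line at
`-2c` (the value of the exponent at `s = 1`); this turns the equation into the linear inequality
`s (exp (2c) + c) ≥ 1 + c`.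
-/

open Real

lemma Real.exp_mul_sub_add_one_le_exp (x y : ℝ) : exp y * (x - y + 1) ≤ exp x := by
  calc exp y * (x - y + 1) ≤ exp y * exp (x - y) := by gcongr; exact add_one_le_exp _
    _ = exp x := by rw [← exp_add, add_sub_cancel]

section FixedPoint

variable {c s : ℝ}

lemma le_exp_neg_of_eq_exp_neg_mul (hc : 0 ≤ c) (hs : 0 ≤ s) (hfix : s = exp (-c * (1 + s))) :
    s ≤ exp (-c) := by
  rw [hfix, exp_le_exp]
  nlinarith

lemma div_le_of_eq_exp_neg_mul (hc : 0 ≤ c) (hfix : s = exp (-c * (1 + s))) :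
    (1 + c) / (exp (2 * c) + c) ≤ s := by
  have tangent : exp (-(2 * c)) * (c * (1 - s) + 1) ≤ s := by
    convert exp_mul_sub_add_one_le_exp (-c * (1 + s)) (-(2 * c)) using 2
    ring
  rw [exp_neg, inv_mul_le_iff₀ (exp_pos _)] at tangent
  rw [div_le_iff₀ (by positivity)]
  linarith

end FixedPoint

theorem stmt_1 (α s : ℝ) (hα : 2 ≤ α) (hs : s ∈ Set.Ioo (0 : ℝ) 1)
    (hfix : s = Real.exp (-2 * (1 + s) / (α + 2))) :
    s ≤ Real.exp (-2 / (α + 2)) ∧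
    (α + 4) / ((α + 2) * Real.exp (4 / (α + 2)) + 2) ≤ s := by
  have hα₂ : 0 < α + 2 := by linarith
  have hc : 0 ≤ 2 / (α + 2) := by positivity
  have hfix' : s = exp (-(2 / (α + 2)) * (1 + s)) := hfix.trans (by congr 1; ring)
  constructor
  · simpa only [neg_div] using le_exp_neg_of_eq_exp_neg_mul hc hs.1.le hfix'
  · convert div_le_of_eq_exp_neg_mul hc hfix' using 1
    rw [show 2 * (2 / (α + 2)) = 4 / (α + 2) by ring]
    field_simp
    ring
end

section
/- For a > 0 and x > 0, the equation a·x·ln x = x + 1 is equivalent to x = 1/(a·W((1/a)·e^{-1/a})), where W is the Lambert W function (the inverse of t ↦ t·e^t on the positive reals). -/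
/-! With `t = 1 / (a x)` the equation `a x log x = x + 1` reads `log x = 1/a + t`, i.e.
`log t + t = log (1/a) - 1/a`; exponentiating gives `t e^t = (1/a) e^{-1/a}`, so `t = W (1/a · e^{-1/a})`. -/

open Real

lemma mul_exp_eq_mul_exp_iff {t c : ℝ} (ht : 0 < t) (hc : 0 < c) (s : ℝ) :
    t * exp t = c * exp s ↔ log t + t = log c + s := by
  rw [← exp_log ht, ← exp_log hc, ← exp_add, ← exp_add, exp_eq_exp, log_exp, log_exp]

lemma mul_log_self_eq_add_one_iff {a x : ℝ} (ha : 0 < a) (hx : 0 < x) :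
    a * x * log x = x + 1 ↔ 1 / (a * x) * exp (1 / (a * x)) = 1 / a * exp (-(1 / a)) := by
  rw [mul_exp_eq_mul_exp_iff (by positivity) (by positivity), one_div, one_div, log_inv,
    log_inv, log_mul ha.ne' hx.ne']
  constructor <;> intro h <;> field_simp at h ⊢ <;> linarith

lemma mul_exp_eq_iff_apply_eq {W : ℝ → ℝ} (hW : ∀ t > 0, W (t * exp t) = t)
    (hW' : ∀ y > 0, W y * exp (W y) = y) {t y : ℝ} (ht : 0 < t) (hy : 0 < y) :
    t * exp t = y ↔ W y = t := by
  constructor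
  · rintro rfl
    exact hW t ht
  · rintro rfl
    exact hW' y hy

lemma eq_one_div_mul_iff_eq_one_div_mul {a x w : ℝ} (ha : 0 < a) (hx : 0 < x) :
    x = 1 / (a * w) ↔ w = 1 / (a * x) := by
  constructor <;> rintro rfl
  · have hw : w ≠ 0 := by rintro rfl; simp at hx
    field_simp
  · field_simp

theorem stmt_3 (W : ℝ → ℝ)
    (hW : ∀ t > 0, W (t * Real.exp t) = t)
    (hW' : ∀ y > 0, 0 < W y ∧ W y * Real.exp (W y) = y)
    (a x : ℝ) (ha : 0 < a) (hx : 0 < x) :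
    a * x * Real.log x = x + 1 ↔
      x = 1 / (a * W ((1 / a) * Real.exp (-(1 / a)))) := by
  rw [mul_log_self_eq_add_one_iff ha hx,
    mul_exp_eq_iff_apply_eq hW (fun y hy ↦ (hW' y hy).2) (by positivity) (by positivity),
    eq_one_div_mul_iff_eq_one_div_mul ha hx, eq_comm]
end

section
/- For every x ∈ (0, 1/2], one has 0 < 1/W(x·e^{-x}) - 2 - 1/x ≤ (4/3)·x², where W is the Lambert W function on the positive reals. -/
/-!
Put `w = W(x e^{-x})`, so `w e^w = x e^{-x}`. As `t ↦ t e^t` is increasing, comparing `w` with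
`x / k` amounts to comparing `k` with `e^{x + x/k}`. For `k = 1 + 2x` the quadratic lower bound
for `exp` gives `k < e^{x + x/k}`, i.e. `1/w > 1/x + 2`. For `k = 1 + 2x + (4/3)x³` one has
`x + x/k ≤ log k`, since the difference vanishes at `0` and has derivative
`(16/9) t³ (5 - (t-1)³) / k(t)²`; this gives `1/w ≤ 1/x + 2 + (4/3)x²`.
-/

open Real Set

theorem strictMonoOn_mul_exp : StrictMonoOn (fun t : ℝ => t * exp t) (Ici 0) :=
  fun s hs _ _ hst => mul_lt_mul'' hst (exp_lt_exp.2 hst) hs (exp_pos s).le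

theorem div_mul_exp_div_eq {x k : ℝ} (hk : k ≠ 0) :
    x / k * exp (x / k) = x * exp (-x) * (exp (x + x / k) / k) := by
  rw [exp_add, exp_neg]
  field_simp

theorem mul_exp_neg_lt_div_mul_exp_div_iff {x k : ℝ} (hx : 0 < x) (hk : 0 < k) :
    x * exp (-x) < x / k * exp (x / k) ↔ k < exp (x + x / k) := by
  rw [div_mul_exp_div_eq hk.ne', lt_mul_iff_one_lt_right (by positivity), one_lt_div hk]

theorem div_mul_exp_div_le_mul_exp_neg_iff {x k : ℝ} (hx : 0 < x) (hk : 0 < k) :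
    x / k * exp (x / k) ≤ x * exp (-x) ↔ exp (x + x / k) ≤ k := by
  rw [div_mul_exp_div_eq hk.ne', mul_le_iff_le_one_right (by positivity), div_le_one hk]

theorem one_add_two_mul_lt_exp {x : ℝ} (hx : 0 < x) : 1 + 2 * x < exp (x + x / (1 + 2 * x)) := by
  set b := x / (1 + 2 * x) with hb
  have hxb : x = b + 2 * x * b := by rw [hb]; field_simp
  have hb0 : 0 < b := by positivity
  nlinarith [quadratic_le_exp_of_nonneg (by positivity : 0 ≤ x + b), mul_pos hx hb0]

theorem hasDerivAt_log_sub_sub_div {D : ℝ → ℝ} {D' t : ℝ} (hD : HasDerivAt D D' t)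
    (ht : D t ≠ 0) :
    HasDerivAt (fun s => log (D s) - s - s / D s)
      ((D t * D' - D t ^ 2 - D t + t * D') / D t ^ 2) t := by
  refine (((hD.log ht).sub (hasDerivAt_id t)).sub ((hasDerivAt_id t).div hD ht)).congr_deriv ?_
  field_simp
  simp only [id_eq]
  ring

theorem add_div_le_log {x : ℝ} (hx0 : 0 ≤ x) (hx2 : x ≤ 2) :
    x + x / (1 + 2 * x + 4 / 3 * x ^ 3) ≤ log (1 + 2 * x + 4 / 3 * x ^ 3) := by
  set D : ℝ → ℝ := fun t => 1 + 2 * t + 4 / 3 * t ^ 3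
  have hD0 : ∀ t ∈ Icc (0 : ℝ) 2, 0 < D t := fun t ht => by
    simp only [D]; nlinarith [ht.1, pow_nonneg ht.1 3]
  have hD' : ∀ t, HasDerivAt D (2 + 4 * t ^ 2) t := fun t => by
    refine ((((hasDerivAt_id t).const_mul 2).const_add 1).add
      ((hasDerivAt_pow 3 t).const_mul (4 / 3))).congr_deriv ?_
    norm_num
    ring
  have hg := fun t (ht : t ∈ Icc (0 : ℝ) 2) => hasDerivAt_log_sub_sub_div (hD' t) (hD0 t ht).ne'
  have hmono : MonotoneOn (fun s => log (D s) - s - s / D s) (Icc 0 2) := by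
    refine monotoneOn_of_hasDerivWithinAt_nonneg (convex_Icc 0 2)
      (fun t ht => (hg t ht).continuousAt.continuousWithinAt)
      (fun t ht => (hg t (interior_subset ht)).hasDerivWithinAt) fun t ht => ?_
    rw [interior_Icc] at ht
    have hnum : D t * (2 + 4 * t ^ 2) - D t ^ 2 - D t + t * (2 + 4 * t ^ 2)
        = 16 / 9 * t ^ 3 * (5 - (t - 1) ^ 3) := by simp only [D]; ring
    have hcube : (t - 1) ^ 3 < 5 := by nlinarith [ht.1, ht.2]
    rw [hnum]
    have ht3 : 0 ≤ 16 / 9 * t ^ 3 := by have := ht.1; positivity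
    exact div_nonneg (mul_nonneg ht3 (sub_nonneg.2 hcube.le)) (sq_nonneg _)
  have hg0 : log (D 0) - 0 - 0 / D 0 = 0 := by simp [D]
  have h := hmono ⟨le_rfl, by norm_num⟩ ⟨hx0, hx2⟩ hx0
  dsimp only [D] at h hg0
  linarith

theorem exp_add_div_le {x : ℝ} (hx0 : 0 ≤ x) (hx2 : x ≤ 2) :
    exp (x + x / (1 + 2 * x + 4 / 3 * x ^ 3)) ≤ 1 + 2 * x + 4 / 3 * x ^ 3 :=
  (le_log_iff_exp_le (by positivity)).1 (add_div_le_log hx0 hx2)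

theorem stmt_4_general (W : ℝ → ℝ)
    (hW' : ∀ y > 0, 0 < W y ∧ W y * Real.exp (W y) = y)
    (x : ℝ) (hx : x ∈ Set.Ioc (0 : ℝ) (1 / 2)) :
    0 < 1 / W (x * Real.exp (-x)) - 2 - 1 / x ∧
    1 / W (x * Real.exp (-x)) - 2 - 1 / x ≤ (4 / 3) * x ^ 2 := by
  obtain ⟨hx0, hx2⟩ := hx
  obtain ⟨hw0, hwe⟩ := hW' (x * exp (-x)) (by positivity)
  set w := W (x * exp (-x))
  have hlin : 0 < 1 + 2 * x := by positivity
  have hcub : 0 < 1 + 2 * x + 4 / 3 * x ^ 3 := by positivity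
  have hw_lt : w < x / (1 + 2 * x) := by
    refine (strictMonoOn_mul_exp.lt_iff_lt hw0.le (mem_Ici.2 (by positivity))).1 ?_
    rw [hwe]
    exact (mul_exp_neg_lt_div_mul_exp_div_iff hx0 hlin).2 (one_add_two_mul_lt_exp hx0)
  have hw_ge : x / (1 + 2 * x + 4 / 3 * x ^ 3) ≤ w := by
    refine (strictMonoOn_mul_exp.le_iff_le (mem_Ici.2 (by positivity)) hw0.le).1 ?_
    rw [hwe]
    exact (div_mul_exp_div_le_mul_exp_neg_iff hx0 hcub).2 (exp_add_div_le hx0.le (by linarith))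
  have hinv_lin : 1 / (x / (1 + 2 * x)) = 1 / x + 2 := by field_simp
  have hinv_cub : 1 / (x / (1 + 2 * x + 4 / 3 * x ^ 3)) = 1 / x + 2 + 4 / 3 * x ^ 2 := by
    field_simp
  constructor
  · linarith [hinv_lin ▸ one_div_lt_one_div_of_lt hw0 hw_lt]
  · linarith [hinv_cub ▸ one_div_le_one_div_of_le (by positivity) hw_ge]

theorem stmt_4 (W : ℝ → ℝ)
    (hW : ∀ t > 0, W (t * Real.exp t) = t)
    (hW' : ∀ y > 0, 0 < W y ∧ W y * Real.exp (W y) = y)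
    (x : ℝ) (hx : x ∈ Set.Ioc (0 : ℝ) (1 / 2)) :
    0 < 1 / W (x * Real.exp (-x)) - 2 - 1 / x ∧
    1 / W (x * Real.exp (-x)) - 2 - 1 / x ≤ (4 / 3) * x ^ 2 :=
  stmt_4_general W hW' x hx
end

section
/- If a sequence (α_i) satisfies α₁ = 2 and α_i + 8 < α_{i+1} ≤ α_i + 8 + (32/3)/(α_i + 2)² for all i ≥ 1, then 8i - 6 < α_i ≤ 8i - 6 + (32/3)·∑_{j=1}^{i-1} 1/(8j - 4)² for all i ≥ 2, and moreover (32/3)·∑_{j=1}^{∞} 1/(8j-4)² = π²/12 < 1, so that 8i - 6 < α_i < 8i - 5 for all i ≥ 2. -/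
/-!
The increments of `α` exceed `8`, so `α (k + 1) ≥ 8k + 2`, strictly once `k ≥ 1`. Feeding this
lower bound into the upper recursion, the `k`-th excess over `8` is at most
`(32/3) / (8k + 4)²`, and summing the excesses gives the upper bound. Finally
`∑ 1/(8j+4)² = (1/16) ∑ 1/(2j+1)² = π²/128`, the odd part of `ζ(2) = π²/6`, and `π²/12 < 1`.
-/

open Real Finset

lemma hasSum_one_div_two_mul_add_one_sq :
    HasSum (fun k : ℕ => 1 / (2 * (k : ℝ) + 1) ^ 2) (π ^ 2 / 8) := by
  set f : ℕ → ℝ := fun n => 1 / (n : ℝ) ^ 2 with hf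
  have hzeta : HasSum f (π ^ 2 / 6) := hasSum_zeta_two
  have heven : HasSum (fun k => f (2 * k)) (π ^ 2 / 6 / 4) :=
    (hzeta.div_const 4).congr_fun fun k => by simp only [hf]; push_cast; ring
  have hodd : Summable (fun k => f (2 * k + 1)) :=
    hzeta.summable.comp_injective fun a b h => by simp_all
  have htsum := hzeta.unique (heven.even_add_odd hodd.hasSum)
  have h := hodd.hasSum
  rw [show ∑' k, f (2 * k + 1) = π ^ 2 / 8 by linarith] at h
  simpa [hf] using h

lemma hasSum_one_div_eight_mul_add_four_sq :
    HasSum (fun j : ℕ => 1 / (8 * (j : ℝ) + 4) ^ 2) (π ^ 2 / 128) := by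
  have h := hasSum_one_div_two_mul_add_one_sq.div_const 16
  rw [show π ^ 2 / 8 / 16 = π ^ 2 / 128 by ring] at h
  exact h.congr_fun fun j => by rw [div_div]; ring

lemma pi_sq_div_twelve_lt_one : π ^ 2 / 12 < 1 := by
  nlinarith [pi_lt_d2, pi_pos]

section Recursion

variable {α : ℕ → ℝ} {d : ℝ}

lemma add_mul_le_of_forall_add_lt_succ (hstep : ∀ i ≥ 1, α i + d < α (i + 1)) (k : ℕ) :
    α 1 + d * k ≤ α (k + 1) := by
  induction k with
  | zero => simp
  | succ k ih =>
    have := hstep (k + 1) (by omega)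
    push_cast
    linarith

lemma add_mul_lt_of_forall_add_lt_succ (hstep : ∀ i ≥ 1, α i + d < α (i + 1)) (k : ℕ) :
    α 1 + d * (k + 1) < α (k + 2) := by
  have := add_mul_le_of_forall_add_lt_succ hstep k
  have := hstep (k + 1) (by omega)
  linarith

lemma le_add_mul_sum_one_div_sq {c : ℝ} (hc : 0 ≤ c) (hα1 : α 1 = 2)
    (hup : ∀ i ≥ 1, α (i + 1) ≤ α i + 8 + c / (α i + 2) ^ 2)
    (hlow : ∀ k : ℕ, 8 * (k : ℝ) + 2 ≤ α (k + 1)) (k : ℕ) :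
    α (k + 1) ≤ 8 * (k : ℝ) + 2 + c * ∑ j ∈ range k, 1 / (8 * (j : ℝ) + 4) ^ 2 := by
  induction k with
  | zero => simp [hα1]
  | succ k ih =>
    have hexcess : c / (α (k + 1) + 2) ^ 2 ≤ c * (1 / (8 * (k : ℝ) + 4) ^ 2) := by
      rw [← div_eq_mul_one_div]
      have := hlow k
      gcongr ?_ / ?_ ^ 2 <;> linarith
    have := hup (k + 1) (by omega)
    rw [sum_range_succ]
    push_cast
    linarith

end Recursion

theorem stmt_7 (α : ℕ → ℝ) (hα1 : α 1 = 2)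
    (hrec : ∀ i ≥ 1, α i + 8 < α (i + 1) ∧
        α (i + 1) ≤ α i + 8 + (32 / 3) / (α i + 2) ^ 2) :
    (∀ i : ℕ, 2 ≤ i → 8 * (i : ℝ) - 6 < α i ∧
        α i ≤ 8 * (i : ℝ) - 6 +
          (32 / 3) * ∑ j ∈ Finset.range (i - 1), 1 / (8 * (j : ℝ) + 4) ^ 2) ∧
    (32 / 3) * (∑' j : ℕ, 1 / (8 * (j : ℝ) + 4) ^ 2) = Real.pi ^ 2 / 12 ∧
    Real.pi ^ 2 / 12 < 1 ∧
    (∀ i : ℕ, 2 ≤ i → 8 * (i : ℝ) - 6 < α i ∧ α i < 8 * (i : ℝ) - 5) := by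
  have hstep i hi := (hrec i hi).1
  have hlow (k : ℕ) : 8 * (k : ℝ) + 2 ≤ α (k + 1) := by
    linarith [add_mul_le_of_forall_add_lt_succ hstep k]
  have hbounds : ∀ i : ℕ, 2 ≤ i → 8 * (i : ℝ) - 6 < α i ∧
      α i ≤ 8 * (i : ℝ) - 6 + (32 / 3) * ∑ j ∈ range (i - 1), 1 / (8 * (j : ℝ) + 4) ^ 2 := by
    intro i hi
    obtain ⟨k, rfl⟩ := Nat.exists_eq_add_of_le' hi
    have hlt := add_mul_lt_of_forall_add_lt_succ hstep k
    have hle := le_add_mul_sum_one_div_sq (by norm_num) hα1 (fun i hi => (hrec i hi).2) hlow (k + 1)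
    push_cast at hle ⊢
    constructor <;> linarith
  have htsum : (32 / 3) * (∑' j : ℕ, 1 / (8 * (j : ℝ) + 4) ^ 2) = π ^ 2 / 12 := by
    rw [hasSum_one_div_eight_mul_add_four_sq.tsum_eq]; ring
  refine ⟨hbounds, htsum, pi_sq_div_twelve_lt_one, fun i hi => ⟨(hbounds i hi).1, ?_⟩⟩
  have hpartial := sum_le_hasSum (range (i - 1)) (fun j _ => by positivity)
    hasSum_one_div_eight_mul_add_four_sq
  linarith [(hbounds i hi).2, pi_sq_div_twelve_lt_one]
end
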